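/- Let w be a piecewise Lipschitz graphon with constant L > 0, Lipschitz intervals I_1,…,I_Q, and δ = min_k |α_k − α_{k−1}|. For x,y ∈ [0,1] define d^c(x,y) = ∫₀¹ (w(s,x) − w(s,y))² ds and d^r(x,y) = ∫₀¹ (w(x,t) − w(y,t))² dt. Let ε > 0 satisfy 0 < (ε/2)² < 2δL. Let A, B be nonempty finite multisets of points of [0,1] with designated pivots a₀ ∈ A and b₀ ∈ B, and suppose that d^c(a₀,a) ≤ ε⁴/(128L) and d^r(a₀,a) ≤ ε⁴/(128L) for every a ∈ A, and d^c(b₀,b) ≤ ε⁴/(128L) and d^r(b₀,b) ≤ ε⁴/(128L) for every b ∈ B. Then for every a ∈ A and b ∈ B: | (1/(|A||B|)) Σ_{x∈A} Σ_{y∈B} w(x,y) − w(a,b) | ≤ 2ε. -/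

import Mathlib

open MeasureTheory

/-- The distance `d(x,y) = ½(∫₀¹ (w(s,x)−w(s,y))² ds + ∫₀¹ (w(x,t)−w(y,t))² dt)`. -/
noncomputable def graphonDist (w : ℝ → ℝ → ℝ) (x y : ℝ) : ℝ :=
  (1 / 2) * ((∫ s in (0:ℝ)..1, (w s x - w s y) ^ 2) + (∫ t in (0:ℝ)..1, (w x t - w y t) ^ 2))

/-- `w` is piecewise Lipschitz with constant `L` and `Q` blocks, with breakpoints
`0 = α 0 < α 1 < … < α Q = 1` and intervals `I_k = [α (k-1), α k]`. -/
def PiecewiseLipschitz (w : ℝ → ℝ → ℝ) (L : ℝ) (Q : ℕ) (α : ℕ → ℝ) : Prop :=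
  α 0 = 0 ∧ α Q = 1 ∧ (∀ k < Q, α k < α (k + 1)) ∧
    ∀ i < Q, ∀ j < Q, ∀ x₁ ∈ Set.Icc (α i) (α (i + 1)), ∀ x₂ ∈ Set.Icc (α i) (α (i + 1)),
      ∀ y₁ ∈ Set.Icc (α j) (α (j + 1)), ∀ y₂ ∈ Set.Icc (α j) (α (j + 1)),
        |w x₁ y₁ - w x₂ y₂| ≤ L * (|x₁ - x₂| + |y₁ - y₂|)

/-!
If `g` is `K`-Lipschitz on an interval of length at least `δ` containing `u`, then `|g| ≥ |g u| / 2`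
on a subinterval of length `min δ (|g u| / (2K))` around `u`, so `∫₀¹ g²` is at least that length
times `|g u|² / 4`. With `K = 2L` and `ε² < 8δL` this exceeds `ε⁴ / (128 L)` once `|g u| > ε / 2`
(for `ε ≤ 1`; for `ε ≥ 1/2` the theorem is trivial as `w` takes values in `[0, 1]`). Applied to
differences of two rows or two columns of `w`, which are `2L`-Lipschitz on every block, the
integral hypotheses make rows and columns `ε / 2`-close pointwise. Going from `(x, y)` to `(a, b)`
through `(a₀, y)`, `(a₀, b₀)` and `(a, b₀)` gives `|w x y - w a b| ≤ 2ε` for all `x ∈ A`, `y ∈ B`,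
and the block average inherits this bound.
-/

open Set
open scoped NNReal

lemma exists_mem_Icc_consecutive {β : Type*} [LinearOrder β] {α : ℕ → β} {u : β}
    (h0 : α 0 ≤ u) : ∀ {n : ℕ}, u ≤ α (n + 1) → ∃ k ≤ n, u ∈ Icc (α k) (α (k + 1))
  | 0, hu => ⟨0, le_rfl, h0, hu⟩
  | n + 1, hu => by
    by_cases h : u ≤ α (n + 1)
    · obtain ⟨k, hk, hmem⟩ := exists_mem_Icc_consecutive h0 h
      exact ⟨k, by omega, hmem⟩
    · exact ⟨n + 1, le_rfl, (not_le.1 h).le, hu⟩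

lemma min_le_sub_of_mem_Icc {a b u r : ℝ} (hu : u ∈ Icc a b) (hr : 0 ≤ r) :
    min (b - a) r ≤ min b (u + r) - max a (u - r) := by
  obtain ⟨hau, hub⟩ := hu
  rcases max_cases a (u - r) with ⟨h₁, _⟩ | ⟨h₁, _⟩ <;>
    rcases min_cases b (u + r) with ⟨h₂, _⟩ | ⟨h₂, _⟩ <;>
    rw [h₁, h₂] <;> linarith [min_le_left (b - a) r, min_le_right (b - a) r]

lemma min_mul_sq_le_integral_sq {g : ℝ → ℝ} {K : ℝ≥0} {a b u : ℝ} (hK : 0 < K)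
    (hg : LipschitzOnWith K g (Icc a b)) (hu : u ∈ Icc a b)
    (hint : IntervalIntegrable (fun s => g s ^ 2) volume a b) :
    min (b - a) (|g u| / (2 * K)) * (|g u| / 2) ^ 2 ≤ ∫ s in a..b, g s ^ 2 := by
  set r := |g u| / (2 * K)
  have hr : 0 ≤ r := by positivity
  have hlen := min_le_sub_of_mem_Icc hu hr
  have hlo : a ≤ max a (u - r) := le_max_left _ _
  have hhi : min b (u + r) ≤ b := min_le_left _ _
  have hlohi : max a (u - r) ≤ min b (u + r) :=
    max_le (le_min (hu.1.trans hu.2) (by linarith [hu.1]))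
      (le_min (by linarith [hu.2]) (by linarith))
  have hfar : ∀ s ∈ Icc (max a (u - r)) (min b (u + r)), (|g u| / 2) ^ 2 ≤ g s ^ 2 := by
    intro s hs
    have hs_ab : s ∈ Icc a b := ⟨hlo.trans hs.1, hs.2.trans hhi⟩
    have hsu : |s - u| ≤ r := abs_sub_le_iff.2
      ⟨by linarith [hs.2.trans (min_le_right _ _)], by linarith [(le_max_right _ _).trans hs.1]⟩
    have hlip : |g s - g u| ≤ K * |s - u| := by
      simpa only [Real.dist_eq] using hg.dist_le_mul s hs_ab u hu
    have hKr : (K : ℝ) * r = |g u| / 2 := by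
      simp only [r]; field_simp
    have hnear : |g u| / 2 ≤ |g s| := by
      linarith [abs_sub_abs_le_abs_sub (g u) (g s), abs_sub_comm (g s) (g u),
        mul_le_mul_of_nonneg_left hsu K.coe_nonneg]
    simpa only [sq_abs] using pow_le_pow_left₀ (by positivity) hnear 2
  calc min (b - a) r * (|g u| / 2) ^ 2
      ≤ (min b (u + r) - max a (u - r)) * (|g u| / 2) ^ 2 := by gcongr
    _ ≤ ∫ s in max a (u - r)..min b (u + r), g s ^ 2 := by
      have hsub : uIcc (max a (u - r)) (min b (u + r)) ⊆ uIcc a b := by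
        rw [uIcc_of_le hlohi, uIcc_of_le (hu.1.trans hu.2)]
        exact Icc_subset_Icc hlo hhi
      simpa using intervalIntegral.integral_mono_on hlohi intervalIntegrable_const
        (hint.mono_set hsub) hfar
    _ ≤ ∫ s in a..b, g s ^ 2 :=
      intervalIntegral.integral_mono_interval hlo hlohi hhi
        (ae_of_all _ fun s => sq_nonneg (g s)) hint

lemma pow_four_div_lt_min_mul_sq {K δ ε c : ℝ} (hK : 0 < K) (hε : 0 < ε) (hε1 : ε ≤ 1)
    (hδ : ε ^ 2 < 4 * δ * K) (hc : ε / 2 < c) :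
    ε ^ 4 / (64 * K) < min δ (c / (2 * K)) * (c / 2) ^ 2 := by
  have hc₀ : 0 < c := by linarith
  have hεc : ε ^ 2 < 4 * c ^ 2 := by nlinarith
  rcases min_cases δ (c / (2 * K)) with ⟨h, _⟩ | ⟨h, _⟩ <;> rw [h, div_lt_iff₀ (by positivity)]
  · nlinarith [mul_lt_mul'' hδ hεc (by positivity) (by positivity)]
  · have hε3 : ε ^ 3 < 8 * c ^ 3 := by nlinarith [mul_pos hε hc₀]
    have hε4 : ε ^ 4 ≤ ε ^ 3 := pow_le_pow_of_le_one hε.le hε1 (by norm_num)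
    field_simp
    nlinarith

lemma abs_le_of_integral_sq_le {g : ℝ → ℝ} {K : ℝ≥0} {a b u δ ε : ℝ} (hK : 0 < K)
    (hε : 0 < ε) (hε1 : ε ≤ 1) (hδ : ε ^ 2 < 4 * δ * K) (hab : δ ≤ b - a) (ha : 0 ≤ a)
    (hb : b ≤ 1) (hg : LipschitzOnWith K g (Icc a b)) (hu : u ∈ Icc a b)
    (hint : IntervalIntegrable (fun s => g s ^ 2) volume 0 1)
    (hsmall : ∫ s in 0..1, g s ^ 2 ≤ ε ^ 4 / (64 * K)) : |g u| ≤ ε / 2 := by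
  by_contra! hc
  have hab' : a ≤ b := hu.1.trans hu.2
  have hblock := min_mul_sq_le_integral_sq hK hg hu
    (hint.mono_set (by rw [uIcc_of_le hab', uIcc_of_le zero_le_one]; exact Icc_subset_Icc ha hb))
  have hmono := intervalIntegral.integral_mono_interval ha hab' hb
    (ae_of_all _ fun s => sq_nonneg (g s)) hint
  have hmin := mul_le_mul_of_nonneg_right (min_le_min_right (|g u| / (2 * K)) hab)
    (sq_nonneg (|g u| / 2))
  linarith [pow_four_div_lt_min_mul_sq (NNReal.coe_pos.2 hK) hε hε1 hδ hc]

lemma intervalIntegrable_sq_of_abs_le {g : ℝ → ℝ} {M : ℝ} (hg : Measurable g)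
    (hM : ∀ s, |g s| ≤ M) (a b : ℝ) : IntervalIntegrable (fun s => g s ^ 2) volume a b :=
  (intervalIntegrable_const (c := M ^ 2)).mono_fun' (hg.pow_const 2).aestronglyMeasurable
    (ae_of_all _ fun s => by
      simpa only [norm_pow, Real.norm_eq_abs] using pow_le_pow_left₀ (abs_nonneg _) (hM s) 2)

namespace PiecewiseLipschitz

variable {w : ℝ → ℝ → ℝ} {L : ℝ} {Q : ℕ} {α : ℕ → ℝ}

lemma swap (h : PiecewiseLipschitz w L Q α) : PiecewiseLipschitz (fun x y => w y x) L Q α := by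
  obtain ⟨h0, hQ, hα, hlip⟩ := h
  refine ⟨h0, hQ, hα, fun i hi j hj x₁ hx₁ x₂ hx₂ y₁ hy₁ y₂ hy₂ => ?_⟩
  rw [add_comm]
  exact hlip j hj i hi y₁ hy₁ y₂ hy₂ x₁ hx₁ x₂ hx₂

lemma exists_mem_block (h : PiecewiseLipschitz w L Q α) (hQ : 0 < Q) {u : ℝ}
    (hu : u ∈ Icc (0 : ℝ) 1) : ∃ k < Q, u ∈ Icc (α k) (α (k + 1)) := by
  obtain ⟨n, rfl⟩ := Nat.exists_eq_add_of_lt hQ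
  obtain ⟨k, hk, hmem⟩ := exists_mem_Icc_consecutive (α := α) (h.1 ▸ hu.1) (by
    rw [zero_add] at h
    exact h.2.1 ▸ hu.2)
  exact ⟨k, by omega, hmem⟩

lemma zero_le (h : PiecewiseLipschitz w L Q α) {k : ℕ} (hk : k ≤ Q) : 0 ≤ α k :=
  h.1 ▸ (strictMonoOn_Iic_of_lt_succ h.2.2.1).monotoneOn (mem_Iic.2 (Nat.zero_le Q))
    (mem_Iic.2 hk) (Nat.zero_le k)

lemma le_one (h : PiecewiseLipschitz w L Q α) {k : ℕ} (hk : k ≤ Q) : α k ≤ 1 :=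
  h.2.1 ▸ (strictMonoOn_Iic_of_lt_succ h.2.2.1).monotoneOn (mem_Iic.2 hk) (mem_Iic.2 le_rfl) hk

lemma lipschitzOnWith_column_sub (h : PiecewiseLipschitz w L Q α) (hQ : 0 < Q) {p q : ℝ}
    (hp : p ∈ Icc (0 : ℝ) 1) (hq : q ∈ Icc (0 : ℝ) 1) {k : ℕ} (hk : k < Q) :
    LipschitzOnWith (L.toNNReal + L.toNNReal) (fun s => w s p - w s q)
      (Icc (α k) (α (k + 1))) := by
  have hcol : ∀ r ∈ Icc (0 : ℝ) 1,
      LipschitzOnWith L.toNNReal (fun s => w s r) (Icc (α k) (α (k + 1))) := by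
    intro r hr
    obtain ⟨j, hj, hrj⟩ := h.exists_mem_block hQ hr
    refine LipschitzOnWith.of_dist_le_mul fun s₁ hs₁ s₂ hs₂ => ?_
    have := h.2.2.2 k hk j hj s₁ hs₁ s₂ hs₂ r hrj r hrj
    rw [sub_self, abs_zero, add_zero] at this
    simpa only [Real.dist_eq, Real.coe_toNNReal'] using
      this.trans (by gcongr; exact le_max_left _ _)
  exact (hcol p hp).sub (hcol q hq)

lemma abs_column_sub_le_of_integral_sq_le (h : PiecewiseLipschitz w L Q α) (hL : 0 < L)
    (hQ : 0 < Q)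
    (hmeas : ∀ p, Measurable fun s => w s p) (hw01 : ∀ x y, w x y ∈ Icc (0 : ℝ) 1)
    {δ ε : ℝ} (hδ : ∀ k < Q, δ ≤ α (k + 1) - α k) (hε : 0 < ε) (hε1 : ε ≤ 1)
    (hεδ : ε ^ 2 < 8 * δ * L) ⦃p q : ℝ⦄ (hp : p ∈ Icc (0 : ℝ) 1) (hq : q ∈ Icc (0 : ℝ) 1)
    (hpq : ∫ s in (0 : ℝ)..1, (w s p - w s q) ^ 2 ≤ ε ^ 4 / (128 * L))
    ⦃u : ℝ⦄ (hu : u ∈ Icc (0 : ℝ) 1) : |w u p - w u q| ≤ ε / 2 := by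
  obtain ⟨k, hk, huk⟩ := h.exists_mem_block hQ hu
  have hK : ((L.toNNReal + L.toNNReal : ℝ≥0) : ℝ) = 2 * L := by
    rw [NNReal.coe_add, Real.coe_toNNReal L hL.le, two_mul]
  have hbound : ∀ s, |w s p - w s q| ≤ 1 := fun s =>
    abs_sub_le_of_nonneg_of_le (hw01 s p).1 (hw01 s p).2 (hw01 s q).1 (hw01 s q).2
  refine abs_le_of_integral_sq_le (g := fun s => w s p - w s q) (by positivity)
    hε hε1 (by rw [hK]; linarith) (hδ k hk) (h.zero_le hk.le) (h.le_one hk)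
    (h.lipschitzOnWith_column_sub hQ hp hq hk) huk
    (intervalIntegrable_sq_of_abs_le ((hmeas p).sub (hmeas q)) hbound 0 1) ?_
  rw [hK]
  exact hpq.trans_eq (by ring)

end PiecewiseLipschitz

lemma abs_sum_map_div_card_sub_le {ι : Type*} {s : Multiset ι} (hs : s ≠ 0) {f : ι → ℝ}
    {c M : ℝ} (h : ∀ x ∈ s, |f x - c| ≤ M) : |(s.map f).sum / Multiset.card s - c| ≤ M := by
  have hcard : (0 : ℝ) < Multiset.card s := by exact_mod_cast Multiset.card_pos.2 hs
  have hup := Multiset.sum_le_card_nsmul (s.map f) (c + M) (Multiset.forall_mem_map_iff.2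
    fun x hx => by linarith [(abs_sub_le_iff.1 (h x hx)).1])
  have hlo := Multiset.card_nsmul_le_sum (s := s.map f) (a := c - M) (Multiset.forall_mem_map_iff.2
    fun x hx => by linarith [(abs_sub_le_iff.1 (h x hx)).2])
  rw [Multiset.card_map, nsmul_eq_mul] at hup hlo
  rw [abs_le, le_sub_iff_add_le, sub_le_iff_le_add, le_div_iff₀ hcard, div_le_iff₀ hcard]
  constructor <;> linarith

lemma abs_double_average_sub_le {ι κ : Type*} {A : Multiset ι} {B : Multiset κ} (hA : A ≠ 0)
    (hB : B ≠ 0) {f : ι → κ → ℝ} {c M : ℝ} (h : ∀ x ∈ A, ∀ y ∈ B, |f x y - c| ≤ M) :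
    |1 / ((Multiset.card A : ℝ) * Multiset.card B) * (A.map fun x => (B.map (f x)).sum).sum - c|
      ≤ M := by
  have hB' : (Multiset.card B : ℝ) ≠ 0 := by exact_mod_cast (Multiset.card_pos.2 hB).ne'
  have hA' : (Multiset.card A : ℝ) ≠ 0 := by exact_mod_cast (Multiset.card_pos.2 hA).ne'
  have hrw : 1 / ((Multiset.card A : ℝ) * Multiset.card B) * (A.map fun x => (B.map (f x)).sum).sum
      = (A.map fun x => (B.map (f x)).sum / Multiset.card B).sum / Multiset.card A := by
    rw [Multiset.sum_map_div]
    field_simp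
  rw [hrw]
  exact abs_sum_map_div_card_sub_le hA fun x hx => abs_sum_map_div_card_sub_le hB (h x hx)

theorem block_average_close_to_graphon_value_general
    (w : ℝ → ℝ → ℝ) (hw_meas : Measurable fun p : ℝ × ℝ => w p.1 p.2)
    (hw01 : ∀ x y, w x y ∈ Set.Icc (0:ℝ) 1)
    (L : ℝ) (hL : 0 < L) (Q : ℕ) (hQ : 0 < Q) (α : ℕ → ℝ)
    (hpl : PiecewiseLipschitz w L Q α)
    (ε : ℝ) (hε : 0 < ε)
    (hεδ : (ε / 2) ^ 2 < 2 * ((Finset.range Q).inf' (Finset.nonempty_range_iff.mpr hQ.ne')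
      fun k => α (k + 1) - α k) * L)
    (A B : Multiset ℝ) (hA : A ≠ 0) (hB : B ≠ 0)
    (hA01 : ∀ a ∈ A, a ∈ Set.Icc (0:ℝ) 1) (hB01 : ∀ b ∈ B, b ∈ Set.Icc (0:ℝ) 1)
    (a₀ b₀ : ℝ) (ha₀ : a₀ ∈ A) (hb₀ : b₀ ∈ B)
    (hrA : ∀ a ∈ A, (∫ t in (0:ℝ)..1, (w a₀ t - w a t) ^ 2) ≤ ε ^ 4 / (128 * L))
    (hcB : ∀ b ∈ B, (∫ s in (0:ℝ)..1, (w s b₀ - w s b) ^ 2) ≤ ε ^ 4 / (128 * L)) :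
    ∀ a ∈ A, ∀ b ∈ B,
      |(1 / ((Multiset.card A : ℝ) * (Multiset.card B : ℝ))) *
          (Multiset.map (fun x => (Multiset.map (fun y => w x y) B).sum) A).sum
        - w a b| ≤ 2 * ε := by
  set δ := (Finset.range Q).inf' (Finset.nonempty_range_iff.mpr hQ.ne') fun k => α (k + 1) - α k
  have hδ : ∀ k < Q, δ ≤ α (k + 1) - α k := fun k hk => Finset.inf'_le _ (Finset.mem_range.2 hk)
  intro a ha b hb
  refine abs_double_average_sub_le hA hB fun x hx y hy => ?_
  rcases le_or_gt 1 (2 * ε) with hbig | hsmall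
  · exact (abs_sub_le_of_nonneg_of_le (hw01 x y).1 (hw01 x y).2 (hw01 a b).1 (hw01 a b).2).trans
      hbig
  have hεδ' : ε ^ 2 < 8 * δ * L := by linarith
  have col := hpl.abs_column_sub_le_of_integral_sq_le hL hQ
    (fun _ => hw_meas.comp (measurable_id.prodMk measurable_const)) hw01 hδ hε (by linarith) hεδ'
  have row := hpl.swap.abs_column_sub_le_of_integral_sq_le hL hQ
    (fun _ => hw_meas.comp (measurable_const.prodMk measurable_id)) (fun x y => hw01 y x) hδ hε
    (by linarith) hεδ'
  have h₁ : |w x y - w a₀ y| ≤ ε / 2 := by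
    rw [abs_sub_comm]; exact row (hA01 a₀ ha₀) (hA01 x hx) (hrA x hx) (hB01 y hy)
  have h₂ : |w a₀ y - w a₀ b₀| ≤ ε / 2 := by
    rw [abs_sub_comm]; exact col (hB01 b₀ hb₀) (hB01 y hy) (hcB y hy) (hA01 a₀ ha₀)
  have h₃ : |w a₀ b₀ - w a b₀| ≤ ε / 2 := row (hA01 a₀ ha₀) (hA01 a ha) (hrA a ha) (hB01 b₀ hb₀)
  have h₄ : |w a b₀ - w a b| ≤ ε / 2 := col (hB01 b₀ hb₀) (hB01 b hb) (hcB b hb) (hA01 a ha)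
  linarith [abs_sub_le (w x y) (w a₀ y) (w a₀ b₀), abs_sub_le (w x y) (w a₀ b₀) (w a b₀),
    abs_sub_le (w x y) (w a b₀) (w a b)]

theorem block_average_close_to_graphon_value
    (w : ℝ → ℝ → ℝ) (hw_meas : Measurable fun p : ℝ × ℝ => w p.1 p.2)
    (hw01 : ∀ x y, w x y ∈ Set.Icc (0:ℝ) 1)
    (L : ℝ) (hL : 0 < L) (Q : ℕ) (hQ : 0 < Q) (α : ℕ → ℝ)
    (hpl : PiecewiseLipschitz w L Q α)
    (ε : ℝ) (hε : 0 < ε)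
    (hεδ : (ε / 2) ^ 2 < 2 * ((Finset.range Q).inf' (Finset.nonempty_range_iff.mpr hQ.ne')
      fun k => α (k + 1) - α k) * L)
    (A B : Multiset ℝ) (hA : A ≠ 0) (hB : B ≠ 0)
    (hA01 : ∀ a ∈ A, a ∈ Set.Icc (0:ℝ) 1) (hB01 : ∀ b ∈ B, b ∈ Set.Icc (0:ℝ) 1)
    (a₀ b₀ : ℝ) (ha₀ : a₀ ∈ A) (hb₀ : b₀ ∈ B)
    (hcA : ∀ a ∈ A, (∫ s in (0:ℝ)..1, (w s a₀ - w s a) ^ 2) ≤ ε ^ 4 / (128 * L))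
    (hrA : ∀ a ∈ A, (∫ t in (0:ℝ)..1, (w a₀ t - w a t) ^ 2) ≤ ε ^ 4 / (128 * L))
    (hcB : ∀ b ∈ B, (∫ s in (0:ℝ)..1, (w s b₀ - w s b) ^ 2) ≤ ε ^ 4 / (128 * L))
    (hrB : ∀ b ∈ B, (∫ t in (0:ℝ)..1, (w b₀ t - w b t) ^ 2) ≤ ε ^ 4 / (128 * L)) :
    ∀ a ∈ A, ∀ b ∈ B,
      |(1 / ((Multiset.card A : ℝ) * (Multiset.card B : ℝ))) *
          (Multiset.map (fun x => (Multiset.map (fun y => w x y) B).sum) A).sum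
        - w a b| ≤ 2 * ε :=
  block_average_close_to_graphon_value_general w hw_meas hw01 L hL Q hQ α hpl ε hε hεδ A B hA hB
    hA01 hB01 a₀ b₀ ha₀ hb₀ hrA hcB
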